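/- arXiv:1610.05542 — 2 statements merged into one kernel-verified Lean document; each statement's English description precedes it below -/
import Mathlib

section
/- Let T > 0 and δ > 0, and let x₊ < 0 be such that A'(x) < 0 for all x ∈ [x₊, 0). Then there exist k > 0 and h₀ > 0 such that for every h ∈ (0, h₀): one has 1/l² + (T+2δ)h < A(x₊)², there is a unique x_h ∈ (x₊, 0) with A(x_h)² = 1/l² + (T+2δ)h, and for every x ∈ [x₊, x_h]: A(x)² − h|A'(x)| − (1/l² + T h) − k x² ≥ δ h. -/
open MeasureTheory Set Filter

/-- The metric coefficient `F(r) = 1 - 2M/r + r²/l²`. -/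
noncomputable def F (M l r : ℝ) : ℝ := 1 - 2*M/r + r^2/l^2

/-- The potential `A(x) = F(r(x))^{1/2}/r(x)`. -/
noncomputable def A (M l : ℝ) (rfun : ℝ → ℝ) (x : ℝ) : ℝ :=
  Real.sqrt (F M l (rfun x)) / rfun x

lemma aux_Fcont (M l : ℝ) : ∀ s : ℝ, s ≠ 0 → ContinuousAt (F M l) s := by
  intro s hs
  have : ContinuousAt (fun r : ℝ => 1 - 2*M/r + r^2/l^2) s := by
    fun_prop (disch := assumption)
  exact this

lemma aux_Fbig (M l : ℝ) (hM : 0 < M) (hl : 0 < l) :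
    ∀ s : ℝ, max 1 (4*M*l^2) ≤ s → s^2/(2*l^2) ≤ F M l s := by
  intro s hs
  have h1 : (1:ℝ) ≤ s := le_trans (le_max_left _ _) hs
  have h2 : 4*M*l^2 ≤ s := le_trans (le_max_right _ _) hs
  have hs0 : 0 < s := lt_of_lt_of_le one_pos h1
  have hcube : 4*M*l^2 ≤ s^3 := by nlinarith [mul_nonneg (mul_nonneg hs0.le (sub_nonneg.2 h1)) (by linarith : (0:ℝ) ≤ s + 1)]
  have key : 1 - 2*M/s + s^2/l^2 - s^2/(2*l^2) = (s^3 + 2*l^2*s - 4*M*l^2)/(2*l^2*s) := by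
    field_simp; ring
  have hpos : 0 ≤ (s^3 + 2*l^2*s - 4*M*l^2)/(2*l^2*s) := by
    apply div_nonneg _ (by positivity)
    nlinarith
  unfold F
  linarith [key ▸ hpos]

lemma aux_rppow : ∀ s : ℝ, 0 < s → s^(-2:ℝ) = (s^2)⁻¹ := fun s hs => by
  rw [Real.rpow_neg hs.le, ← Real.rpow_natCast s 2]; norm_num

lemma aux_int (M l rS : ℝ) (hM : 0 < M) (hl : 0 < l) (hrS : 0 < rS)
    (hFpos : ∀ r, rS < r → 0 < F M l r) :
    ∀ r, rS < r → IntegrableOn (fun s => (F M l s)⁻¹) (Ioi r) := by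
  intro r hr
  have hcontAt : ∀ s : ℝ, rS < s → ContinuousAt (fun t => (F M l t)⁻¹) s := fun s hs =>
    ContinuousAt.inv₀ (aux_Fcont M l s (ne_of_gt (lt_trans hrS hs))) (hFpos s hs).ne'
  set R0 : ℝ := max (rS+1) (max 1 (4*M*l^2)) with hR0
  set R : ℝ := max r R0 with hRdef
  have hrR : r ≤ R := le_max_left _ _
  have hR0pos : 0 < R := lt_of_lt_of_le one_pos (le_trans (le_trans (le_max_left 1 _) (le_max_right (rS+1) _)) (le_max_right r R0))
  have hRS : rS < R := lt_of_lt_of_le hr hrR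
  rw [← Ioc_union_Ioi_eq_Ioi hrR, integrableOn_union]
  constructor
  · have hc : ContinuousOn (fun t => (F M l t)⁻¹) (Icc r R) := fun s hs =>
      (hcontAt s (lt_of_lt_of_le hr hs.1)).continuousWithinAt
    exact (hc.integrableOn_Icc).mono_set Ioc_subset_Icc_self
  · have hint : IntegrableOn (fun s : ℝ => 2*l^2 * s^(-2:ℝ)) (Ioi R) :=
      (integrableOn_Ioi_rpow_of_lt (by norm_num) hR0pos).const_mul (2*l^2)
    refine Integrable.mono' hint ?_ ?_
    · exact (ContinuousOn.aestronglyMeasurable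
        (fun s hs => (hcontAt s (lt_trans hRS hs)).continuousWithinAt) measurableSet_Ioi)
    · refine (ae_restrict_iff' measurableSet_Ioi).2 (ae_of_all _ fun s hs => ?_)
      have hsR : R < s := hs
      have hs0 : 0 < s := lt_trans hR0pos hsR
      have hbig : s^2/(2*l^2) ≤ F M l s := by
        apply aux_Fbig M l hM hl
        calc max 1 (4*M*l^2) ≤ R0 := le_max_right _ _
        _ ≤ R := le_max_right _ _
        _ ≤ s := hsR.le
      have hFs : 0 < F M l s := hFpos s (lt_trans hRS hsR)
      rw [Real.norm_eq_abs, abs_of_nonneg (inv_nonneg.2 hFs.le)]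
      calc (F M l s)⁻¹ ≤ (s^2/(2*l^2))⁻¹ := by
            apply inv_anti₀ (by positivity) hbig
      _ = 2*l^2 * s^(-2:ℝ) := by rw [aux_rppow s hs0]; field_simp

lemma aux_nonneg_ae (M l rS : ℝ) (hFpos : ∀ r, rS < r → 0 < F M l r) {s : Set ℝ}
    (hs : MeasurableSet s) (hsub : s ⊆ Ioi rS) :
    0 ≤ᵐ[volume.restrict s] fun t => (F M l t)⁻¹ :=
  (ae_restrict_iff' hs).2 (ae_of_all _ fun t ht => inv_nonneg.2 (hFpos t (hsub ht)).le)

lemma aux_pos_Ioi (M l rS : ℝ) (hM : 0 < M) (hl : 0 < l) (hrS : 0 < rS)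
    (hFpos : ∀ r, rS < r → 0 < F M l r) :
    ∀ r, rS < r → 0 < ∫ s in Ioi r, (F M l s)⁻¹ := by
  intro r hr
  rw [setIntegral_pos_iff_support_of_nonneg_ae
    (aux_nonneg_ae M l rS hFpos measurableSet_Ioi (Ioi_subset_Ioi hr.le))
    (aux_int M l rS hM hl hrS hFpos r hr)]
  have hsub : Ioi r ⊆ Function.support (fun t => (F M l t)⁻¹) ∩ Ioi r := fun t ht =>
    ⟨by simp [Function.mem_support, (hFpos t (hr.trans ht)).ne'], ht⟩
  calc (0:ENNReal) < volume (Ioi r) := by simp [Real.volume_Ioi]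
  _ ≤ _ := measure_mono hsub

lemma aux_pos_Ioc (M l rS : ℝ) (hM : 0 < M) (hl : 0 < l) (hrS : 0 < rS)
    (hFpos : ∀ r, rS < r → 0 < F M l r) :
    ∀ r1 r2, rS < r1 → r1 < r2 → 0 < ∫ s in Ioc r1 r2, (F M l s)⁻¹ := by
  intro r1 r2 h1 h12
  rw [setIntegral_pos_iff_support_of_nonneg_ae
    (aux_nonneg_ae M l rS hFpos measurableSet_Ioc (fun t ht => lt_trans h1 ht.1))
    ((aux_int M l rS hM hl hrS hFpos r1 h1).mono_set Ioc_subset_Ioi_self)]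
  have hsub : Ioc r1 r2 ⊆ Function.support (fun t => (F M l t)⁻¹) ∩ Ioc r1 r2 := fun t ht =>
    ⟨by simp [Function.mem_support, (hFpos t (h1.trans ht.1)).ne'], ht⟩
  calc (0:ENNReal) < volume (Ioc r1 r2) := by simp [Real.volume_Ioc]; linarith
  _ ≤ _ := measure_mono hsub

lemma aux_split (M l rS : ℝ) (hM : 0 < M) (hl : 0 < l) (hrS : 0 < rS)
    (hFpos : ∀ r, rS < r → 0 < F M l r) :
    ∀ r1 r2, rS < r1 → r1 ≤ r2 →
    (∫ s in Ioi r1, (F M l s)⁻¹)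
      = (∫ s in Ioc r1 r2, (F M l s)⁻¹) + ∫ s in Ioi r2, (F M l s)⁻¹ := by
  intro r1 r2 h1 h12
  rw [← Ioc_union_Ioi_eq_Ioi h12, setIntegral_union Ioc_disjoint_Ioi_same measurableSet_Ioi
    ((aux_int M l rS hM hl hrS hFpos r1 h1).mono_set Ioc_subset_Ioi_self)
    (aux_int M l rS hM hl hrS hFpos r2 (lt_of_lt_of_le h1 h12))]

lemma aux_phi_mono (M l rS : ℝ) (hM : 0 < M) (hl : 0 < l) (hrS : 0 < rS)
    (hFpos : ∀ r, rS < r → 0 < F M l r) :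
    StrictMonoOn (fun r => -(∫ s in Ioi r, (F M l s)⁻¹)) (Ioi rS) := by
  intro r1 hr1 r2 hr2 h12
  have := aux_split M l rS hM hl hrS hFpos r1 r2 hr1 h12.le
  have := aux_pos_Ioc M l rS hM hl hrS hFpos r1 r2 hr1 h12
  simp only []
  linarith

lemma aux_phi_deriv (M l rS : ℝ) (hM : 0 < M) (hl : 0 < l) (hrS : 0 < rS)
    (hFpos : ∀ r, rS < r → 0 < F M l r) :
    ∀ r, rS < r → HasDerivAt (fun u => -(∫ s in Ioi u, (F M l s)⁻¹)) (F M l r)⁻¹ r := by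
  intro r hr
  set r1 : ℝ := (rS + r)/2 with hr1def
  have hr1a : rS < r1 := by simp only [hr1def]; linarith
  have hr1b : r1 < r := by simp only [hr1def]; linarith
  have heq : ∀ u ∈ Ioi r1,
      -(∫ s in Ioi u, (F M l s)⁻¹)
        = -(∫ s in Ioi r1, (F M l s)⁻¹) + ∫ t in r1..u, (F M l t)⁻¹ := by
    intro u hu
    rw [intervalIntegral.integral_of_le (le_of_lt hu),
      aux_split M l rS hM hl hrS hFpos r1 u hr1a (le_of_lt hu)]
    ring
  have hii : IntervalIntegrable (fun t => (F M l t)⁻¹) volume r1 r :=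
    (intervalIntegrable_iff_integrableOn_Ioc_of_le hr1b.le).2
      ((aux_int M l rS hM hl hrS hFpos r1 hr1a).mono_set Ioc_subset_Ioi_self)
  have hmeas : StronglyMeasurableAtFilter (fun t => (F M l t)⁻¹) (nhds r) :=
    ⟨Ioi rS, Ioi_mem_nhds hr, ContinuousOn.aestronglyMeasurable
      (fun s hs => (ContinuousAt.inv₀ (aux_Fcont M l s (ne_of_gt (lt_trans hrS hs)))
        (hFpos s hs).ne').continuousWithinAt) measurableSet_Ioi⟩
  have hcont : ContinuousAt (fun t => (F M l t)⁻¹) r :=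
    ContinuousAt.inv₀ (aux_Fcont M l r (ne_of_gt (lt_trans hrS hr))) (hFpos r hr).ne'
  have hD : HasDerivAt (fun u => -(∫ s in Ioi r1, (F M l s)⁻¹) + ∫ t in r1..u, (F M l t)⁻¹)
      ((F M l r)⁻¹) r :=
    (intervalIntegral.integral_hasDerivAt_right hii hmeas hcont).const_add _
  exact hD.congr_of_eventuallyEq (eventuallyEq_of_mem (Ioi_mem_nhds hr1b) heq)

lemma aux_xbound (M l rS : ℝ) (hM : 0 < M) (hl : 0 < l) (hrS : 0 < rS)
    (hFpos : ∀ r, rS < r → 0 < F M l r) :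
    ∀ r, rS < r → max 1 (4*M*l^2) ≤ r → (∫ s in Ioi r, (F M l s)⁻¹) ≤ 2*l^2/r := by
  intro r hrs hr
  have hr0 : 0 < r := lt_of_lt_of_le one_pos (le_trans (le_max_left _ _) hr)
  have hmono : (∫ s in Ioi r, (F M l s)⁻¹) ≤ ∫ s in Ioi r, 2*l^2 * s^(-2:ℝ) := by
    apply setIntegral_mono_on (aux_int M l rS hM hl hrS hFpos r hrs)
      ((integrableOn_Ioi_rpow_of_lt (by norm_num) hr0).const_mul (2*l^2)) measurableSet_Ioi
    intro s hs
    have hs0 : 0 < s := lt_trans hr0 hs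
    have hbig : s^2/(2*l^2) ≤ F M l s := aux_Fbig M l hM hl s (le_trans hr (le_of_lt hs))
    calc (F M l s)⁻¹ ≤ (s^2/(2*l^2))⁻¹ := inv_anti₀ (by positivity) hbig
    _ = 2*l^2 * s^(-2:ℝ) := by rw [aux_rppow s hs0]; field_simp
  have hval : (∫ s in Ioi r, 2*l^2 * s^(-2:ℝ)) = 2*l^2/r := by
    rw [MeasureTheory.integral_const_mul, integral_Ioi_rpow_of_lt (by norm_num) hr0]
    norm_num
    rw [Real.rpow_neg_one]
    field_simp
  linarith

noncomputable def Gaux (M l r : ℝ) : ℝ := 1/l^2 + ((r^2)⁻¹ - 2*M*(r^3)⁻¹)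
noncomputable def psiAux (M l r : ℝ) : ℝ := (-2*(r^3)⁻¹ + 6*M*(r^4)⁻¹) * F M l r

lemma aux_Gderiv (M l : ℝ) : ∀ r : ℝ, r ≠ 0 →
    HasDerivAt (Gaux M l) (-2*(r^3)⁻¹ + 6*M*(r^4)⁻¹) r := by
  intro r hr
  have h2 : HasDerivAt (fun x : ℝ => (x^(-2:ℤ))) (((-2:ℤ):ℝ)*r^((-2:ℤ)-1)) r :=
    hasDerivAt_zpow (-2) r (Or.inl hr)
  have h3 : HasDerivAt (fun x : ℝ => (x^(-3:ℤ))) (((-3:ℤ):ℝ)*r^((-3:ℤ)-1)) r :=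
    hasDerivAt_zpow (-3) r (Or.inl hr)
  have hD := (h2.sub (h3.const_mul (2*M))).const_add (1/l^2)
  have hfun : (fun x : ℝ => 1/l^2 + (x^(-2:ℤ) - 2*M*x^(-3:ℤ))) = Gaux M l := by
    funext x; unfold Gaux
    rw [zpow_neg, zpow_neg]
    norm_cast
  simp only [Pi.sub_apply] at hD
  rw [hfun] at hD
  refine hD.congr_deriv ?_
  rw [show ((-2:ℤ)-1) = (-3:ℤ) by norm_num, show ((-3:ℤ)-1) = (-4:ℤ) by norm_num,
    zpow_neg, zpow_neg]
  norm_cast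
  push_cast
  ring

set_option maxHeartbeats 2000000 in
/-- Let `T, δ > 0` and let `x₊ < 0` with `A' < 0` on `[x₊,0)`.  There are
`k > 0`, `h₀ > 0` such that for every `h ∈ (0,h₀)`:
`1/l² + (T+2δ)h < A(x₊)²`, there is a unique `x_h ∈ (x₊,0)` with
`A(x_h)² = 1/l² + (T+2δ)h`, and for every `x ∈ [x₊, x_h]`:
`A(x)² − h|A'(x)| − (1/l² + Th) − kx² ≥ δh`. -/
theorem stmt_15 (M l : ℝ) (hM : 0 < M) (hl : 0 < l)
    (rSAdS : ℝ) (hrS : 0 < rSAdS) (hroot : F M l rSAdS = 0)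
    (hFpos : ∀ r, rSAdS < r → 0 < F M l r)
    (rfun : ℝ → ℝ)
    (hrange : ∀ x, x < 0 → rSAdS < rfun x)
    (hinv1 : ∀ x, x < 0 → -(∫ s in Set.Ioi (rfun x), (F M l s)⁻¹) = x)
    (hinv2 : ∀ r, rSAdS < r → rfun (-(∫ s in Set.Ioi r, (F M l s)⁻¹)) = r)
    (hAsm : ContDiffOn ℝ (⊤ : ℕ∞) (A M l rfun) (Set.Iio 0))
    (hAlim : Tendsto (A M l rfun) (nhdsWithin 0 (Set.Iio 0)) (nhds (1/l)))
    (T δ : ℝ) (hT : 0 < T) (hδ : 0 < δ)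
    (xp : ℝ) (hxp : xp < 0)
    (hA' : ∀ x, xp ≤ x → x < 0 → deriv (A M l rfun) x < 0) :
    ∃ k > 0, ∃ h₀ > 0, ∀ h : ℝ, 0 < h → h < h₀ →
      (1/l^2 + (T + 2*δ)*h < (A M l rfun xp)^2) ∧
      (∃! xh, xh ∈ Set.Ioo xp (0:ℝ) ∧
        (A M l rfun xh)^2 = 1/l^2 + (T + 2*δ)*h) ∧
      (∀ xh, xh ∈ Set.Ioo xp (0:ℝ) →
        (A M l rfun xh)^2 = 1/l^2 + (T + 2*δ)*h →
        ∀ x ∈ Set.Icc xp xh,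
          δ*h ≤ (A M l rfun x)^2 - h * |deriv (A M l rfun) x|
              - (1/l^2 + T*h) - k*x^2) := by
  have hxpsq : (0:ℝ) < xp^2 := by nlinarith [mul_pos (neg_pos.2 hxp) (neg_pos.2 hxp)]
  have hT2pos : (0:ℝ) < T+2*δ := by linarith
  have hT2ne : (T+2*δ) ≠ 0 := hT2pos.ne'
  -- basic positivity of rfun and the "time function" φ
  have hphi_neg : ∀ r, rSAdS < r → -(∫ s in Set.Ioi r, (F M l s)⁻¹) < 0 := fun r hr =>
    neg_neg_iff_pos.2 (aux_pos_Ioi M l rSAdS hM hl hrS hFpos r hr)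
  have hrpos : ∀ x, x < 0 → 0 < rfun x := fun x hx => hrS.trans (hrange x hx)
  -- rfun is strictly monotone on Iio 0
  have hrmono : StrictMonoOn rfun (Set.Iio 0) := by
    intro x hx y hy hxy
    by_contra hcon
    push_neg at hcon
    rcases eq_or_lt_of_le hcon with heq | hlt
    · have h1 := hinv1 x hx
      have h2 := hinv1 y hy
      rw [heq] at h2
      rw [h1] at h2
      exact absurd h2 (ne_of_lt hxy)
    · have := aux_phi_mono M l rSAdS hM hl hrS hFpos (hrange y hy) (hrange x hx) hlt
      simp only [] at this
      rw [hinv1 x hx, hinv1 y hy] at this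
      exact absurd hxy (not_lt.2 this.le)
  have himg : rfun '' (Set.Iio 0) = Set.Ioi rSAdS := by
    apply Set.Subset.antisymm
    · rintro _ ⟨x, hx, rfl⟩; exact hrange x hx
    · intro r hr
      exact ⟨-(∫ s in Set.Ioi r, (F M l s)⁻¹), hphi_neg r hr, hinv2 r hr⟩
  have hrcont : ∀ x, x < 0 → ContinuousAt rfun x := fun x hx =>
    hrmono.continuousAt_of_image_mem_nhds (Iio_mem_nhds hx)
      (by rw [himg]; exact Ioi_mem_nhds (hrange x hx))
  have hrderiv : ∀ x, x < 0 → HasDerivAt rfun (F M l (rfun x)) x := by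
    intro x hx
    have h1 := aux_phi_deriv M l rSAdS hM hl hrS hFpos (rfun x) (hrange x hx)
    have h2 : ∀ᶠ y in nhds x, (fun u => -(∫ s in Set.Ioi u, (F M l s)⁻¹)) (rfun y) = y :=
      eventually_of_mem (Iio_mem_nhds hx) (fun y hy => hinv1 y hy)
    have := HasDerivAt.of_local_left_inverse (hrcont x hx) h1
      (inv_ne_zero (hFpos _ (hrange x hx)).ne') h2
    simpa [inv_inv] using this
  -- positivity of A
  have hApos : ∀ x, x < 0 → 0 < A M l rfun x := fun x hx =>
    div_pos (Real.sqrt_pos.2 (hFpos _ (hrange x hx))) (hrpos x hx)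
  -- the squared potential
  have hgval : ∀ x, x < 0 → (A M l rfun x)^2 = Gaux M l (rfun x) := by
    intro x hx
    have hr0 : (0:ℝ) < rfun x := hrpos x hx
    have hF := (hFpos _ (hrange x hx)).le
    unfold A Gaux
    rw [div_pow, Real.sq_sqrt hF]
    unfold F
    field_simp
    ring
  -- derivative of the squared potential
  have hgderiv : ∀ x, x < 0 →
      HasDerivAt (fun y => (A M l rfun y)^2) (psiAux M l (rfun x)) x := by
    intro x hx
    have hG := aux_Gderiv M l (rfun x) (hrpos x hx).ne'
    have hcomp := hG.comp x (hrderiv x hx)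
    have heq : (fun y => Gaux M l (rfun y)) =ᶠ[nhds x] (fun y => (A M l rfun y)^2) :=
      eventually_of_mem (Iio_mem_nhds hx) (fun y hy => (hgval y hy).symm)
    exact (hcomp.congr_of_eventuallyEq heq.symm :)
  -- A is differentiable on Iio 0
  have haderiv : ∀ x, x < 0 → HasDerivAt (A M l rfun) (deriv (A M l rfun) x) x := by
    intro x hx
    exact (((hAsm.differentiableOn (by simp)) x hx).differentiableAt (Iio_mem_nhds hx)).hasDerivAt
  have hderiv_eq : ∀ x, x < 0 →
      deriv (A M l rfun) x = psiAux M l (rfun x) / (2 * A M l rfun x) := by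
    intro x hx
    have h2 : HasDerivAt (fun y => (A M l rfun y)^2)
        (2 * A M l rfun x * deriv (A M l rfun) x) x := by
      have := (haderiv x hx).pow 2
      exact this.congr_deriv (by norm_num)
    have huniq := h2.unique (hgderiv x hx)
    have hA0 : A M l rfun x ≠ 0 := (hApos x hx).ne'
    field_simp
    linarith [huniq]
  -- rfun tends to infinity
  have hrtop : Tendsto rfun (nhdsWithin 0 (Set.Iio 0)) atTop := by
    rw [tendsto_atTop]
    intro b
    set R' := max b (rSAdS + 1) with hR'def
    have hR' : rSAdS < R' := lt_of_lt_of_le (lt_add_one rSAdS) (le_max_right _ _)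
    set xR := -(∫ s in Set.Ioi R', (F M l s)⁻¹) with hxRdef
    have hxR : xR < 0 := hphi_neg R' hR'
    filter_upwards [Ioo_mem_nhdsLT_of_mem (Set.mem_Ioc.2 ⟨hxR, le_refl (0:ℝ)⟩)] with x hx
    have hmono := hrmono hxR (Set.mem_Iio.2 hx.2) hx.1
    rw [hinv2 R' hR'] at hmono
    exact le_trans (le_max_left _ _) hmono.le
  -- psi tends to 0 at infinity
  have hψ0 : Tendsto (psiAux M l) atTop (nhds 0) := by
    set q : ℝ → ℝ := fun t =>
      (-2*t^3 + 6*M*t^4)*(1 - 2*M*t) + (-2*t + 6*M*t^2)*(1/l^2) with hqdef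
    have hqc : Continuous q := by fun_prop
    have hq0 : q 0 = 0 := by simp [hqdef]
    have htend : Tendsto (fun r : ℝ => q r⁻¹) atTop (nhds 0) := by
      rw [← hq0]
      exact (hqc.tendsto 0).comp tendsto_inv_atTop_zero
    apply htend.congr'
    filter_upwards [eventually_gt_atTop (0:ℝ)] with r hr
    have h3 : r ≠ 0 := hr.ne'
    unfold psiAux F
    simp only [hqdef]
    field_simp
  -- deriv A tends to 0 at 0⁻
  have hA'0 : Tendsto (deriv (A M l rfun)) (nhdsWithin 0 (Set.Iio 0)) (nhds 0) := by
    have hnum : Tendsto (fun x => psiAux M l (rfun x)) (nhdsWithin 0 (Set.Iio 0)) (nhds 0) :=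
      hψ0.comp hrtop
    have hden : Tendsto (fun x => 2 * A M l rfun x) (nhdsWithin 0 (Set.Iio 0))
        (nhds (2 * (1/l))) := hAlim.const_mul 2
    have hden0 : 2 * (1/l) ≠ 0 := by positivity
    have := hnum.div hden hden0
    rw [zero_div] at this
    apply this.congr'
    filter_upwards [self_mem_nhdsWithin] with x hx
    exact (hderiv_eq x hx).symm
  -- limit of g
  have hglim : Tendsto (fun x => (A M l rfun x)^2) (nhdsWithin 0 (Set.Iio 0))
      (nhds (1/l^2)) := by
    have := hAlim.pow 2
    convert this using 2
    rw [div_pow, one_pow]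
    -- strict monotonicity of g on [xp, 0)
  have hganti : StrictAntiOn (fun y => (A M l rfun y)^2) (Set.Ico xp 0) := by
    apply strictAntiOn_of_deriv_neg (convex_Ico xp 0)
    · intro z hz
      exact (hgderiv z hz.2).continuousAt.continuousWithinAt
    · intro z hz
      rw [interior_Ico] at hz
      have hd : HasDerivAt (fun y => (A M l rfun y)^2)
          (2 * A M l rfun z * deriv (A M l rfun) z) z := by
        exact ((haderiv z hz.2).pow 2).congr_deriv (by norm_num)
      rw [hd.deriv]
      exact mul_neg_of_pos_of_neg (mul_pos two_pos (hApos z hz.2)) (hA' z hz.1.le hz.2)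
  have hgweak : ∀ x, xp ≤ x → x < 0 → 1/l^2 ≤ (A M l rfun x)^2 := by
    intro x hx1 hx2
    apply le_of_tendsto hglim
    filter_upwards [Ioo_mem_nhdsLT_of_mem (Set.mem_Ioc.2 ⟨hx2, le_refl (0:ℝ)⟩)] with z hz
    exact (hganti ⟨hx1, hx2⟩ ⟨le_trans hx1 hz.1.le, hz.2⟩ hz.1).le
  have hgstrict : ∀ x, xp ≤ x → x < 0 → 1/l^2 < (A M l rfun x)^2 := by
    intro x hx1 hx2
    have h1 : x < x/2 := by linarith
    have h2 : x/2 < 0 := by linarith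
    calc 1/l^2 ≤ (A M l rfun (x/2))^2 := hgweak _ (by linarith) h2
    _ < (A M l rfun x)^2 := hganti ⟨hx1, hx2⟩ ⟨by linarith, h2⟩ h1
  -- quadratic lower bound : g x - 1/l² ≥ lam x²
  obtain ⟨lam, hlam, hquad⟩ : ∃ lam, 0 < lam ∧ ∀ x, xp ≤ x → x < 0 →
      lam * x^2 ≤ (A M l rfun x)^2 - 1/l^2 := by
    set R1 : ℝ := max (max 1 (4*M*l^2)) (max (4*M) (rSAdS+1)) with hR1def
    have hR1S : rSAdS < R1 :=
      lt_of_lt_of_le (lt_add_one _) (le_trans (le_max_right _ _) (le_max_right _ _))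
    set x2 : ℝ := -(∫ s in Set.Ioi R1, (F M l s)⁻¹) with hx2def
    have hx2neg : x2 < 0 := hphi_neg R1 hR1S
    have hrx2 : rfun x2 = R1 := hinv2 R1 hR1S
    set m : ℝ := max x2 (xp/2) with hmdef
    have hmneg : m < 0 := max_lt hx2neg (by linarith)
    have hmxp : xp < m := lt_of_lt_of_le (by linarith : xp < xp/2) (le_max_right _ _)
    have hc2 : 0 < (A M l rfun m)^2 - 1/l^2 := by
      linarith [hgstrict m hmxp.le hmneg]
    refine ⟨min ((8*l^4)⁻¹) (((A M l rfun m)^2 - 1/l^2)/xp^2),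
      lt_min (by positivity) (div_pos hc2 hxpsq), ?_⟩
    intro x hx1 hx2'
    rcases le_or_gt x m with hxm | hmx
    · have hge : (A M l rfun m)^2 ≤ (A M l rfun x)^2 := by
        rcases eq_or_lt_of_le hxm with he | hlt
        · rw [he]
        · exact (hganti ⟨hx1, hx2'⟩ ⟨hmxp.le, hmneg⟩ hlt).le
      have hxsq : x^2 ≤ xp^2 := by nlinarith
      have h5 : min ((8*l^4)⁻¹) (((A M l rfun m)^2 - 1/l^2)/xp^2) * x^2
          ≤ (((A M l rfun m)^2 - 1/l^2)/xp^2) * xp^2 :=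
        mul_le_mul (min_le_right _ _) hxsq (sq_nonneg x) (div_pos hc2 hxpsq).le
      have h6 : (((A M l rfun m)^2 - 1/l^2)/xp^2) * xp^2 = (A M l rfun m)^2 - 1/l^2 :=
        div_mul_cancel₀ _ hxpsq.ne'
      linarith
    · have hrge : R1 ≤ rfun x := by
        rw [← hrx2]
        exact (hrmono hx2neg hx2' (lt_of_le_of_lt (le_max_left _ _) hmx)).le
      have hr0 : (0:ℝ) < rfun x := hrpos x hx2'
      have h4M : 4*M ≤ rfun x :=
        le_trans (le_trans (le_max_left _ _) (le_max_right _ _)) hrge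
      have hb : max 1 (4*M*l^2) ≤ rfun x := le_trans (le_max_left _ _) hrge
      have hxb : -x ≤ 2*l^2/rfun x := by
        have h7 := aux_xbound M l rSAdS hM hl hrS hFpos (rfun x) (hrange x hx2') hb
        have h8 := hinv1 x hx2'
        linarith
      have hcsq : (2*l^2/rfun x)^2 = 4*l^4/(rfun x)^2 := by
        rw [div_pow]; norm_num; ring
      have hx2b : x^2 ≤ 4*l^4/(rfun x)^2 := by
        have h9 : 0 ≤ -x := by linarith
        have h10 : (0:ℝ) ≤ 2*l^2/rfun x + -x := add_nonneg (by positivity) h9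
        nlinarith [mul_nonneg (sub_nonneg.2 hxb) h10]
      have hglower : 1/(2*(rfun x)^2) ≤ (A M l rfun x)^2 - 1/l^2 := by
        rw [hgval x hx2']
        unfold Gaux
        have e1 : ((rfun x)^2)⁻¹ - 2*M*((rfun x)^3)⁻¹ - 1/(2*(rfun x)^2)
            = ((rfun x) - 4*M)/(2*(rfun x)^3) := by
          field_simp; ring
        have e2 : 0 ≤ ((rfun x) - 4*M)/(2*(rfun x)^3) :=
          div_nonneg (by linarith) (by positivity)
        linarith
      have hfinal : min ((8*l^4)⁻¹) (((A M l rfun m)^2 - 1/l^2)/xp^2) * x^2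
          ≤ 1/(2*(rfun x)^2) := by
        calc min ((8*l^4)⁻¹) (((A M l rfun m)^2 - 1/l^2)/xp^2) * x^2
            ≤ (8*l^4)⁻¹ * (4*l^4/(rfun x)^2) :=
              mul_le_mul (min_le_left _ _) hx2b (sq_nonneg x) (by positivity)
        _ = 1/(2*(rfun x)^2) := by field_simp; ring
      linarith
  -- the near-horizon region where |A'| is small
  obtain ⟨x1, hxpx1, hx1neg, hsmall⟩ : ∃ x1, xp < x1 ∧ x1 < 0 ∧
      ∀ x, x1 ≤ x → x < 0 → |deriv (A M l rfun) x| < δ/2 := by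
    have hev : ∀ᶠ x in nhdsWithin 0 (Set.Iio 0), |deriv (A M l rfun) x| < δ/2 := by
      have := Metric.tendsto_nhds.mp hA'0 (δ/2) (by linarith)
      simpa [Real.dist_eq] using this
    obtain ⟨x1', hx1'0, hx1'sub⟩ := mem_nhdsLT_iff_exists_Ioo_subset.1 hev
    refine ⟨(max x1' (xp/2))/2, ?_, ?_, ?_⟩
    · have : xp/2 ≤ max x1' (xp/2) := le_max_right _ _
      have hm0 : max x1' (xp/2) < 0 := max_lt hx1'0 (by linarith)
      linarith
    · have hm0 : max x1' (xp/2) < 0 := max_lt hx1'0 (by linarith)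
      linarith
    · intro x hx hx0
      have hm0 : max x1' (xp/2) < 0 := max_lt hx1'0 (by linarith)
      have : x1' < x := by
        have h1 : x1' ≤ max x1' (xp/2) := le_max_left _ _
        have h2 : max x1' (xp/2) < (max x1' (xp/2))/2 := by linarith
        linarith
      exact hx1'sub ⟨this, hx0⟩
  -- bound on |A'| on the compact left part
  have hdercont : ContinuousOn (deriv (A M l rfun)) (Set.Iio 0) :=
    hAsm.continuousOn_deriv_of_isOpen isOpen_Iio (by simp)
  obtain ⟨C, hC⟩ := (isCompact_Icc (a := xp) (b := x1)).exists_bound_of_continuousOn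
    (hdercont.mono (fun y hy => lt_of_le_of_lt hy.2 hx1neg))
  have hC'pos : (0:ℝ) < max C 1 := lt_of_lt_of_le one_pos (le_max_right _ _)
  have hCb : ∀ x, xp ≤ x → x ≤ x1 → |deriv (A M l rfun) x| ≤ max C 1 := by
    intro x h1 h2
    calc |deriv (A M l rfun) x| = ‖deriv (A M l rfun) x‖ := (Real.norm_eq_abs _).symm
    _ ≤ C := hC x ⟨h1, h2⟩
    _ ≤ max C 1 := le_max_left _ _
  -- constants
  have hgxp : 1/l^2 < (A M l rfun xp)^2 := hgstrict xp le_rfl hxp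
  have hc0 : 0 < (A M l rfun x1)^2 - 1/l^2 := by linarith [hgstrict x1 hxpx1.le hx1neg]
  set c0 : ℝ := (A M l rfun x1)^2 - 1/l^2 with hc0def
  set k : ℝ := min (c0/(4*xp^2)) (lam*δ/(2*(T+2*δ))) with hkdef
  have hk : 0 < k := lt_min (div_pos hc0 (by linarith)) (div_pos (mul_pos hlam hδ) (by linarith))
  set h₀ : ℝ := min (min (((A M l rfun xp)^2 - 1/l^2)/(2*(T+2*δ))) (c0/(2*(T+2*δ))))
    (c0/(4*(max C 1))) with hh₀def
  have hh₀ : 0 < h₀ := by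
    apply lt_min (lt_min _ _) _
    · exact div_pos (by linarith) (by linarith)
    · exact div_pos hc0 (by linarith)
    · exact div_pos hc0 (by linarith [hC'pos])
  refine ⟨k, hk, h₀, hh₀, fun h hh hhlt => ?_⟩
  have hb1 : (T+2*δ)*h < ((A M l rfun xp)^2 - 1/l^2)/2 := by
    have h1 : h < ((A M l rfun xp)^2 - 1/l^2)/(2*(T+2*δ)) :=
      lt_of_lt_of_le hhlt (le_trans (min_le_left _ _) (min_le_left _ _))
    have h2 := mul_lt_mul_of_pos_left h1 (by linarith : (0:ℝ) < T+2*δ)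
    calc (T+2*δ)*h < (T+2*δ)*(((A M l rfun xp)^2 - 1/l^2)/(2*(T+2*δ))) := h2
    _ = ((A M l rfun xp)^2 - 1/l^2)/2 := by field_simp
  have hb2 : (T+2*δ)*h < c0/2 := by
    have h1 : h < c0/(2*(T+2*δ)) :=
      lt_of_lt_of_le hhlt (le_trans (min_le_left _ _) (min_le_right _ _))
    have h2 := mul_lt_mul_of_pos_left h1 (by linarith : (0:ℝ) < T+2*δ)
    calc (T+2*δ)*h < (T+2*δ)*(c0/(2*(T+2*δ))) := h2
    _ = c0/2 := by field_simp
  have hb3 : (max C 1)*h < c0/4 := by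
    have h1 : h < c0/(4*(max C 1)) := lt_of_lt_of_le hhlt (min_le_right _ _)
    have h2 := mul_lt_mul_of_pos_left h1 hC'pos
    have hCne : (max C 1) ≠ 0 := hC'pos.ne'
    calc (max C 1)*h < (max C 1)*(c0/(4*(max C 1))) := h2
    _ = c0/4 := by field_simp
  have hTh : 0 < (T+2*δ)*h := mul_pos (by linarith) hh
  have hδh : 0 < δ*h := mul_pos hδ hh
  have hpart1 : 1/l^2 + (T + 2*δ)*h < (A M l rfun xp)^2 := by linarith
  refine ⟨hpart1, ?_, ?_⟩
  · -- existence and uniqueness of xh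
    have hvl : 1/l^2 < 1/l^2 + (T+2*δ)*h := by linarith
    have hev2 : ∀ᶠ y in nhdsWithin 0 (Set.Iio 0),
        (A M l rfun y)^2 < 1/l^2 + (T+2*δ)*h := hglim.eventually_lt_const hvl
    have hev3 : ∀ᶠ y in nhdsWithin 0 (Set.Iio 0), y ∈ Set.Ioo xp 0 :=
      eventually_of_mem (Ioo_mem_nhdsLT_of_mem (Set.mem_Ioc.2 ⟨hxp, le_refl (0:ℝ)⟩))
        (fun y hy => hy)
    obtain ⟨y, hy1, hy2⟩ := (hev2.and hev3).exists
    have hycont : ContinuousOn (fun z => (A M l rfun z)^2) (Set.Icc xp y) := fun z hz =>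
      (hgderiv z (lt_of_le_of_lt hz.2 hy2.2)).continuousAt.continuousWithinAt
    obtain ⟨xh, hxhmem, hxheq0⟩ := intermediate_value_Icc' hy2.1.le hycont
      ⟨hy1.le, hpart1.le⟩
    have hxheq : (A M l rfun xh)^2 = 1/l^2 + (T+2*δ)*h := hxheq0
    have hxh0 : xh < 0 := lt_of_le_of_lt hxhmem.2 hy2.2
    have hxhgt : xp < xh := by
      rcases eq_or_lt_of_le hxhmem.1 with he | hlt
      · exfalso; rw [← he] at hxheq; linarith
      · exact hlt
    refine ⟨xh, ⟨⟨hxhgt, hxh0⟩, hxheq⟩, ?_⟩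
    rintro z ⟨hz1, hz2⟩
    exact hganti.injOn ⟨hz1.1.le, hz1.2⟩ ⟨hxhgt.le, hxh0⟩
      (show (A M l rfun z)^2 = (A M l rfun xh)^2 by rw [hz2, hxheq])
  · -- the main estimate
    intro xh hxhm hxheq x hx
    have hx0 : x < 0 := lt_of_le_of_lt hx.2 hxhm.2
    have hxxp : xp ≤ x := hx.1
    have hS : 0 ≤ (A M l rfun x)^2 - (A M l rfun xh)^2 := by
      rcases eq_or_lt_of_le hx.2 with he | hlt
      · rw [he]; simp
      · exact sub_nonneg.2 (hganti ⟨hxxp, hx0⟩ ⟨le_trans hxxp hx.2, hxhm.2⟩ hlt).le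
    have hgx : (A M l rfun x)^2
        = ((A M l rfun x)^2 - (A M l rfun xh)^2) + 1/l^2 + (T+2*δ)*h := by
      rw [hxheq]; ring
    rcases le_or_gt x x1 with hcase | hcase
    · -- far region
      have hge : (A M l rfun x1)^2 ≤ (A M l rfun x)^2 := by
        rcases eq_or_lt_of_le hcase with he | hlt
        · rw [he]
        · exact (hganti ⟨hxxp, hx0⟩ ⟨hxpx1.le, hx1neg⟩ hlt).le
      have hSb : c0 - (T+2*δ)*h ≤ (A M l rfun x)^2 - (A M l rfun xh)^2 := by
        rw [hxheq]; simp only [hc0def]; linarith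
      have habs : |deriv (A M l rfun) x| ≤ max C 1 := hCb x hxxp hcase
      have hxsq : x^2 ≤ xp^2 := by nlinarith
      have hkx : k*x^2 ≤ c0/4 := by
        have h5 : k*x^2 ≤ (c0/(4*xp^2))*xp^2 :=
          mul_le_mul (min_le_left _ _) hxsq (sq_nonneg x) (div_pos hc0 (by linarith)).le
        have h6 : (c0/(4*xp^2))*xp^2 = c0/4 := by have := hxp.ne; field_simp
        linarith
      have habs2 : h*|deriv (A M l rfun) x| ≤ (max C 1)*h := by
        have := mul_le_mul_of_nonneg_left habs hh.le
        linarith [this]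
      linarith
    · -- near region
      have habs : |deriv (A M l rfun) x| ≤ δ/2 := (hsmall x hcase.le hx0).le
      have hquadx : lam * x^2 ≤ (A M l rfun x)^2 - 1/l^2 := hquad x hxxp hx0
      have hk2 : k ≤ lam*δ/(2*(T+2*δ)) := min_le_right _ _
      have hklam : k ≤ lam := by
        apply le_trans hk2
        rw [div_le_iff₀ (by linarith : (0:ℝ) < 2*(T+2*δ))]
        nlinarith
      have hkT : k*(T+2*δ) ≤ lam*δ/2 := by
        have h7 := mul_le_mul_of_nonneg_right hk2 (by linarith : (0:ℝ) ≤ T+2*δ)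
        have h8 : (lam*δ/(2*(T+2*δ)))*(T+2*δ) = lam*δ/2 := by field_simp
        linarith
      have t1 : k*(lam*x^2) ≤ k*(((A M l rfun x)^2 - (A M l rfun xh)^2) + (T+2*δ)*h) :=
        mul_le_mul_of_nonneg_left (by linarith) hk.le
      have t2 : k*((A M l rfun x)^2 - (A M l rfun xh)^2)
          ≤ lam*((A M l rfun x)^2 - (A M l rfun xh)^2) :=
        mul_le_mul_of_nonneg_right hklam hS
      have t3 := mul_le_mul_of_nonneg_right hkT hh.le
      have hkey : lam*(k*x^2)
          ≤ lam*(((A M l rfun x)^2 - (A M l rfun xh)^2) + δ/2*h) := by nlinarith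
      have hdiv : k*x^2 ≤ ((A M l rfun x)^2 - (A M l rfun xh)^2) + δ/2*h :=
        le_of_mul_le_mul_left hkey hlam
      have habs2 : h*|deriv (A M l rfun) x| ≤ h*(δ/2) :=
        mul_le_mul_of_nonneg_left habs hh.le
      linarith
end

section
/- Let 𝓗 be a complex Hilbert space, let Pr : 𝓗 → 𝓗 be a bounded linear operator with ‖Pr‖ ≤ 1, and let U : [0, ∞) → (𝓗 → 𝓗) be a family of bounded linear operators. Suppose there are constants C > 0, D > 0, δ > 0 and h₀ > 0 such that for every h ∈ (0, h₀) there exist φ_h ∈ 𝓗 with ‖φ_h‖ = 1 and E_h ∈ ℝ satisfying ‖U(t)φ_h − e^{i t E_h} φ_h‖ ≤ C t e^{−D/h} for all t ≥ 0, and ‖Pr φ_h‖ ≥ δ. Then limsup_{t → ∞} sup_{φ ∈ 𝓗, ‖φ‖ = 1} ln(t) ‖Pr(U(t)φ)‖ ≥ D/2. -/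
open Filter Topology

/-! At the time `t_h = δ/(2C) · e^{D/h}` the quasimode error `C t e^{-D/h}` equals `δ/2`, so the
unit vector `U(t_h) φ_h` still has `‖Pr (U(t_h) φ_h)‖ ≥ δ/2`, while `ln t_h = ln(δ/(2C)) + D/h`.
Letting `h → 0⁺` sends `t_h → ∞` and makes `ln t_h ≥ D/δ`, which gives `ln t_h ‖Pr (U(t_h) φ_h)‖ ≥ D/2`
along times tending to infinity. -/

lemma norm_sub_le_norm_apply_of_norm_sub_smul_le {𝕜 E : Type*} [RCLike 𝕜] [NormedAddCommGroup E]
    [NormedSpace 𝕜 E] {P : E →L[𝕜] E} (hP : ‖P‖ ≤ 1) {c : 𝕜} (hc : ‖c‖ = 1) {φ ψ : E} {ε : ℝ}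
    (h : ‖ψ - c • φ‖ ≤ ε) : ‖P φ‖ - ε ≤ ‖P ψ‖ := by
  have hsub : ‖P ψ - P (c • φ)‖ ≤ ε := by
    rw [← map_sub]
    exact (P.le_opNorm _).trans ((mul_le_of_le_one_left (norm_nonneg _) hP).trans h)
  have hsmul : ‖P (c • φ)‖ = ‖P φ‖ := by rw [map_smul, norm_smul, hc, one_mul]
  linarith [norm_sub_norm_le (P (c • φ)) (P ψ), norm_sub_rev (P (c • φ)) (P ψ)]

lemma le_limsup_iSup_coe_of_frequently {α ι : Type*} {l : Filter α} {f : α → ι → ℝ} {a : ℝ}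
    (h : ∃ᶠ t in l, ∃ i, a ≤ f t i) :
    (a : EReal) ≤ limsup (fun t => ⨆ i, (f t i : EReal)) l :=
  le_limsup_of_frequently_le
    (h.mono fun t ⟨i, hi⟩ => (EReal.coe_le_coe_iff.2 hi).trans (le_iSup (fun i => (f t i : EReal)) i))
    isBounded_le_of_top

lemma Complex.norm_exp_I_mul_ofReal_mul_ofReal (t E : ℝ) :
    ‖Complex.exp (Complex.I * t * E)‖ = 1 := by
  rw [show Complex.I * t * E = ((t * E : ℝ) : ℂ) * Complex.I by push_cast; ring]
  exact Complex.norm_exp_ofReal_mul_I _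

theorem stmt_19_general {𝓗 : Type*} [NormedAddCommGroup 𝓗]
    [InnerProductSpace ℂ 𝓗]
    (Pr : 𝓗 →L[ℂ] 𝓗) (hPr : ‖Pr‖ ≤ 1)
    (U : ℝ → (𝓗 →L[ℂ] 𝓗))
    (C D δ h₀ : ℝ) (hC : 0 < C) (hD : 0 < D) (hδ : 0 < δ) (hh₀ : 0 < h₀)
    (hyp : ∀ h : ℝ, 0 < h → h < h₀ →
      ∃ φ : 𝓗, ∃ E : ℝ, ‖φ‖ = 1 ∧
        (∀ t : ℝ, 0 ≤ t →
          ‖U t φ - Complex.exp (Complex.I * (t : ℂ) * (E : ℂ)) • φ‖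
            ≤ C * t * Real.exp (-D/h)) ∧
        δ ≤ ‖Pr φ‖) :
    ((D/2 : ℝ) : EReal) ≤
      Filter.limsup
        (fun t : ℝ =>
          ⨆ φ : {ψ : 𝓗 // ‖ψ‖ = 1},
            ((Real.log t * ‖Pr (U t φ.1)‖ : ℝ) : EReal))
        Filter.atTop := by
  set t : ℝ → ℝ := fun h => δ / (2 * C) * Real.exp (D / h) with ht
  have ht_top : Tendsto t (𝓝[>] 0) atTop :=
    (Real.tendsto_exp_atTop.comp (tendsto_inv_nhdsGT_zero.const_mul_atTop hD)).const_mul_atTop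
      (by positivity)
  have hlog_top : Tendsto (fun h => Real.log (t h)) (𝓝[>] 0) atTop :=
    Real.tendsto_log_atTop.comp ht_top
  refine le_limsup_iSup_coe_of_frequently (ht_top.frequently (Eventually.frequently ?_))
  filter_upwards [Ioo_mem_nhdsGT hh₀, hlog_top.eventually_ge_atTop (D / δ)] with h ⟨h0, hh⟩ hlog
  obtain ⟨φ, E, hφ, hU, hPφ⟩ := hyp h h0 hh
  have herr : C * t h * Real.exp (-D / h) = δ / 2 := by
    rw [ht, neg_div, Real.exp_neg]
    field_simp
  have hPU : δ / 2 ≤ ‖Pr (U (t h) φ)‖ := by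
    have := norm_sub_le_norm_apply_of_norm_sub_smul_le hPr
      (Complex.norm_exp_I_mul_ofReal_mul_ofReal (t h) E) ((hU _ (by positivity)).trans_eq herr)
    linarith
  refine ⟨⟨φ, hφ⟩, ?_⟩
  calc D / 2 = D / δ * (δ / 2) := by field_simp
    _ ≤ Real.log (t h) * ‖Pr (U (t h) φ)‖ :=
      mul_le_mul hlog hPU (by positivity) ((div_pos hD hδ).le.trans hlog)

/-- Abstract lower bound on the local energy decay: if `Pr` is a bounded
operator with `‖Pr‖ ≤ 1` and for each small `h` there is a unit quasimode
`φ_h` with `‖U(t)φ_h − e^{itE_h}φ_h‖ ≤ C t e^{−D/h}` and `‖Pr φ_h‖ ≥ δ`,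
then `limsup_{t→∞} sup_{‖φ‖=1} ln(t)‖Pr(U(t)φ)‖ ≥ D/2`. -/
theorem stmt_19 {𝓗 : Type*} [NormedAddCommGroup 𝓗]
    [InnerProductSpace ℂ 𝓗] [CompleteSpace 𝓗]
    (Pr : 𝓗 →L[ℂ] 𝓗) (hPr : ‖Pr‖ ≤ 1)
    (U : ℝ → (𝓗 →L[ℂ] 𝓗))
    (C D δ h₀ : ℝ) (hC : 0 < C) (hD : 0 < D) (hδ : 0 < δ) (hh₀ : 0 < h₀)
    (hyp : ∀ h : ℝ, 0 < h → h < h₀ →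
      ∃ φ : 𝓗, ∃ E : ℝ, ‖φ‖ = 1 ∧
        (∀ t : ℝ, 0 ≤ t →
          ‖U t φ - Complex.exp (Complex.I * (t : ℂ) * (E : ℂ)) • φ‖
            ≤ C * t * Real.exp (-D/h)) ∧
        δ ≤ ‖Pr φ‖) :
    ((D/2 : ℝ) : EReal) ≤
      Filter.limsup
        (fun t : ℝ =>
          ⨆ φ : {ψ : 𝓗 // ‖ψ‖ = 1},
            ((Real.log t * ‖Pr (U t φ.1)‖ : ℝ) : EReal))
        Filter.atTop :=
  stmt_19_general Pr hPr U C D δ h₀ hC hD hδ hh₀ hyp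
end
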